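/- arXiv:2403.14005 — 4 statements merged into one kernel-verified Lean document; each statement's English description precedes it below -/
import Mathlib

section
/- Let V be a real inner product space and x ∈ V. Define the bracket [ξ,η] = ⟨η,x⟩•ξ − ⟨ξ,x⟩•η on V, and on ℝⁿ ⊕ ℝ (with ℝⁿ identified with the orthogonal complement of x, assuming ‖x‖=1) the semidirect-sum bracket [(ξ,λ),(η,μ)] = (μ•ξ − λ•η, 0). Then the linear map F(ξ) = (ξ − ⟨ξ,x⟩•x, ⟨ξ,x⟩) is a bijective Lie algebra homomorphism: F([ξ,η]) = [F(ξ), F(η)]. -/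
open RealInnerProductSpace

section SplitAlong

variable {V : Type*} [NormedAddCommGroup V] [InnerProductSpace ℝ V]

/-- `ξ ↦ (ξ - ⟪ξ, x⟫ • x, ⟪ξ, x⟫)`; for a unit vector `x` it splits `ξ` into its components
orthogonal and parallel to `x`. -/
noncomputable def splitAlong (x : V) : V →ₗ[ℝ] V × ℝ :=
  (LinearMap.id - (innerₛₗ ℝ x).smulRight x).prod (innerₛₗ ℝ x)

variable (x : V)

theorem splitAlong_apply (ξ : V) : splitAlong x ξ = (ξ - ⟪ξ, x⟫ • x, ⟪ξ, x⟫) := by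
  simp [splitAlong, real_inner_comm x ξ]

theorem splitAlong_fst_add_snd_smul (ξ : V) :
    (splitAlong x ξ).1 + (splitAlong x ξ).2 • x = ξ := by
  simp [splitAlong_apply]

theorem splitAlong_injective : Function.Injective (splitAlong x) :=
  Function.LeftInverse.injective (g := fun p : V × ℝ => p.1 + p.2 • x)
    (splitAlong_fst_add_snd_smul x)

theorem splitAlong_bracket (ξ η : V) :
    splitAlong x (⟪η, x⟫ • ξ - ⟪ξ, x⟫ • η) =
      ((splitAlong x η).2 • (splitAlong x ξ).1 - (splitAlong x ξ).2 • (splitAlong x η).1, 0) := by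
  have h_inner : ⟪⟪η, x⟫ • ξ - ⟪ξ, x⟫ • η, x⟫ = 0 := by
    rw [inner_sub_left, real_inner_smul_left, real_inner_smul_left, mul_comm, sub_self]
  rw [splitAlong_apply, splitAlong_apply, splitAlong_apply, h_inner, Prod.mk.injEq]
  exact ⟨by module, rfl⟩

variable {x}

theorem splitAlong_fst_mem_orthogonal (hx : ‖x‖ = 1) (ξ : V) :
    (splitAlong x ξ).1 ∈ (ℝ ∙ x)ᗮ := by
  rw [splitAlong_apply, Submodule.mem_orthogonal_singleton_iff_inner_left, inner_sub_left,
    real_inner_smul_left, real_inner_self_eq_norm_sq, hx, one_pow, mul_one, sub_self]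

theorem splitAlong_add_smul (hx : ‖x‖ = 1) {u : V} (hu : u ∈ (ℝ ∙ x)ᗮ) (c : ℝ) :
    splitAlong x (u + c • x) = (u, c) := by
  rw [Submodule.mem_orthogonal_singleton_iff_inner_left] at hu
  have h_inner : ⟪u + c • x, x⟫ = c := by
    rw [inner_add_left, hu, real_inner_smul_left, real_inner_self_eq_norm_sq, hx]
    ring
  rw [splitAlong_apply, h_inner, add_sub_cancel_right]

end SplitAlong

/-- The map `F(ξ) = (ξ − ⟨ξ,x⟩•x, ⟨ξ,x⟩)` is a linear bijection onto `(x)ᗮ × ℝ`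
taking the bracket `[ξ,η] = ⟨η,x⟩•ξ − ⟨ξ,x⟩•η` to the semidirect-sum bracket
`[(u,λ),(v,μ)] = (μ•u − λ•v, 0)`. -/
theorem stmt_2 {V : Type*} [NormedAddCommGroup V] [InnerProductSpace ℝ V]
    (x : V) (hx : ‖x‖ = 1)
    (b : V → V → V) (hb : ∀ ξ η : V, b ξ η = ⟪η, x⟫ • ξ - ⟪ξ, x⟫ • η)
    (F : V → V × ℝ) (hF : ∀ ξ : V, F ξ = (ξ - ⟪ξ, x⟫ • x, ⟪ξ, x⟫)) :
    (∀ ξ : V, (F ξ).1 ∈ (ℝ ∙ x)ᗮ) ∧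
    (∀ ξ η : V, F (ξ + η) = F ξ + F η) ∧
    (∀ (c : ℝ) (ξ : V), F (c • ξ) = c • F ξ) ∧
    Function.Injective F ∧
    (∀ u : V, ∀ lam : ℝ, u ∈ (ℝ ∙ x)ᗮ → ∃ ξ : V, F ξ = (u, lam)) ∧
    (∀ ξ η : V, F (b ξ η) = ((F η).2 • (F ξ).1 - (F ξ).2 • (F η).1, 0)) := by
  obtain rfl : F = splitAlong x := funext fun ξ => (hF ξ).trans (splitAlong_apply x ξ).symm
  obtain rfl : b = fun ξ η => ⟪η, x⟫ • ξ - ⟪ξ, x⟫ • η := funext₂ hb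
  exact ⟨splitAlong_fst_mem_orthogonal hx, map_add _, map_smul _, splitAlong_injective x,
    fun u lam hu => ⟨u + lam • x, splitAlong_add_smul hx hu lam⟩, splitAlong_bracket x⟩
end

section
/- Let V be a real inner product space and x ∈ V a unit vector, with a(ξ,η,γ) = (⟨ξ,η⟩ + ⟨x,ξ⟩⟨x,η⟩)•γ − (⟨ξ,γ⟩ + ⟨x,ξ⟩⟨x,γ⟩)•η. Then for fixed ξ,η, the map D(γ) = a(γ,ξ,η) is a derivation of the triple product: D(a(u,v,γ)) = a(D(u),v,γ) + a(u,D(v),γ) + a(u,v,D(γ)) for all u,v,γ ∈ V. -/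
open RealInnerProductSpace

/-- For fixed `ξ, η`, the map `D(γ) = a(γ,ξ,η)` is a derivation of the triple
product `a`. -/
theorem stmt_6 {V : Type*} [NormedAddCommGroup V] [InnerProductSpace ℝ V]
    (x : V) (hx : ⟪x, x⟫ = (1 : ℝ))
    (a : V → V → V → V)
    (ha : ∀ ξ η γ : V,
      a ξ η γ = (⟪ξ, η⟫ + ⟪x, ξ⟫ * ⟪x, η⟫) • γ - (⟪ξ, γ⟫ + ⟪x, ξ⟫ * ⟪x, γ⟫) • η)
    (ξ η : V) (D : V → V) (hD : ∀ γ : V, D γ = a γ ξ η) :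
    ∀ u v γ : V, D (a u v γ) = a (D u) v γ + a u (D v) γ + a u v (D γ) := by
  intro u v γ
  simp only [hD, ha, inner_sub_left, inner_sub_right, inner_smul_left, inner_smul_right,
    RCLike.ofReal_real_eq_id, id, real_inner_comm, hx, RCLike.star_def, conj_trivial]
  match_scalars <;> ring
end

section
/- For a unit vector ξ ∈ ℝ^{m+1} and x₀ on the unit sphere with ⟨ξ,x₀⟩ = tanh σ and x₀ ≠ ±ξ, the curve x(t) = tanh(σ+t)•ξ + sech(σ+t)•x̃₀, with x̃₀ = cosh(σ)•x₀ − sinh(σ)•ξ, satisfies the ODE x'(t) = ξ − ⟨ξ,x(t)⟩•x(t) with x(0) = x₀, and stays on the unit sphere: ‖x(t)‖ = 1 for all t. -/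
open RealInnerProductSpace

/-!
With `w := cosh σ • x₀ - sinh σ • ξ`, the pair `(ξ, w)` is orthonormal, and
`x t = y (σ + t)` for `y u = tanh u • ξ + sech u • w`. On this curve `⟪ξ, y u⟫ = tanh u`,
and `tanh' = sech² = 1 - tanh²`, `sech' = -tanh · sech` turn `y'` into `ξ - ⟪ξ, y⟫ • y`;
`‖y u‖² = tanh² u + sech² u = 1` by Pythagoras.
-/

namespace Real

theorem hasDerivAt_tanh (u : ℝ) : HasDerivAt tanh (cosh u ^ 2)⁻¹ u := by
  have hcosh : cosh u ≠ 0 := (cosh_pos u).ne'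
  have h := (hasDerivAt_sinh u).div (hasDerivAt_cosh u) hcosh
  rw [show sinh / cosh = tanh from funext fun v => (tanh_eq_sinh_div_cosh v).symm] at h
  refine h.congr_deriv ?_
  field_simp
  linarith [cosh_sq_sub_sinh_sq u]

theorem tanh_sq_add_inv_cosh_sq (u : ℝ) : tanh u ^ 2 + (cosh u)⁻¹ ^ 2 = 1 := by
  rw [tanh_eq_sinh_div_cosh]
  field_simp
  linarith [cosh_sq_sub_sinh_sq u]

theorem hasDerivAt_cosh_inv (u : ℝ) :
    HasDerivAt (fun v => (cosh v)⁻¹) (-(tanh u * (cosh u)⁻¹)) u := by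
  refine ((hasDerivAt_cosh u).inv (cosh_pos u).ne').congr_deriv ?_
  rw [tanh_eq_sinh_div_cosh]
  ring

end Real

open Real

section TanhSechCurve

variable {V : Type*} [NormedAddCommGroup V] [InnerProductSpace ℝ V]

noncomputable def tanhSechCurve (ξ w : V) (u : ℝ) : V := tanh u • ξ + (cosh u)⁻¹ • w

theorem inner_tanhSechCurve (ξ w : V) (hξ : ‖ξ‖ = 1) (hξw : ⟪ξ, w⟫ = 0) (u : ℝ) :
    ⟪ξ, tanhSechCurve ξ w u⟫ = tanh u := by
  simp [tanhSechCurve, inner_add_right, real_inner_smul_right, hξw, hξ]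

theorem norm_tanhSechCurve (ξ w : V) (hξ : ‖ξ‖ = 1) (hw : ‖w‖ = 1) (hξw : ⟪ξ, w⟫ = 0)
    (u : ℝ) : ‖tanhSechCurve ξ w u‖ = 1 := by
  have hsq : ‖tanhSechCurve ξ w u‖ ^ 2 = 1 := by
    rw [tanhSechCurve, norm_add_sq_real, real_inner_smul_left, real_inner_smul_right, hξw,
      norm_smul, norm_smul, hξ, hw, norm_eq_abs, norm_eq_abs]
    simp only [mul_one, sq_abs, mul_zero, add_zero]
    exact tanh_sq_add_inv_cosh_sq u
  exact (pow_eq_one_iff_of_nonneg (norm_nonneg _) two_ne_zero).mp hsq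

theorem hasDerivAt_tanhSechCurve (ξ w : V) (hξ : ‖ξ‖ = 1) (hξw : ⟪ξ, w⟫ = 0) (u : ℝ) :
    HasDerivAt (tanhSechCurve ξ w)
      (ξ - ⟪ξ, tanhSechCurve ξ w u⟫ • tanhSechCurve ξ w u) u := by
  refine (((hasDerivAt_tanh u).smul_const ξ).add
    ((hasDerivAt_cosh_inv u).smul_const w)).congr_deriv ?_
  rw [inner_tanhSechCurve ξ w hξ hξw, tanhSechCurve, tanh_eq_sinh_div_cosh]
  match_scalars
  · field_simp
    linarith [cosh_sq_sub_sinh_sq u]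
  · ring

theorem inner_cosh_smul_sub_sinh_smul (ξ x₀ : V) (hξ : ‖ξ‖ = 1) (σ : ℝ)
    (hσ : ⟪ξ, x₀⟫ = tanh σ) : ⟪ξ, cosh σ • x₀ - sinh σ • ξ⟫ = 0 := by
  rw [inner_sub_right, real_inner_smul_right, real_inner_smul_right, real_inner_self_eq_norm_sq,
    hξ, hσ, tanh_eq_sinh_div_cosh]
  field_simp
  ring

theorem norm_cosh_smul_sub_sinh_smul (ξ x₀ : V) (hξ : ‖ξ‖ = 1) (hx₀ : ‖x₀‖ = 1) (σ : ℝ)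
    (hσ : ⟪ξ, x₀⟫ = tanh σ) : ‖cosh σ • x₀ - sinh σ • ξ‖ = 1 := by
  have hsq : ‖cosh σ • x₀ - sinh σ • ξ‖ ^ 2 = 1 := by
    rw [norm_sub_sq_real, real_inner_smul_left, real_inner_smul_right, real_inner_comm, hσ,
      norm_smul, norm_smul, hξ, hx₀, norm_eq_abs, norm_eq_abs, tanh_eq_sinh_div_cosh]
    field_simp
    simp only [sq_abs]
    linarith [cosh_sq_sub_sinh_sq σ]
  exact (pow_eq_one_iff_of_nonneg (norm_nonneg _) two_ne_zero).mp hsq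

theorem tanhSechCurve_cosh_smul_sub_sinh_smul (ξ x₀ : V) (σ : ℝ) :
    tanhSechCurve ξ (cosh σ • x₀ - sinh σ • ξ) σ = x₀ := by
  rw [tanhSechCurve, tanh_eq_sinh_div_cosh]
  match_scalars
  · field_simp
    ring
  · field_simp

end TanhSechCurve

theorem stmt_9_general {V : Type*} [NormedAddCommGroup V] [InnerProductSpace ℝ V]
    (ξ x₀ : V) (hξ : ‖ξ‖ = 1) (hx₀ : ‖x₀‖ = 1)
    (σ : ℝ) (hσ : ⟪ξ, x₀⟫ = Real.tanh σ)
    (x : ℝ → V)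
    (hxdef : ∀ t : ℝ, x t = Real.tanh (σ + t) • ξ +
      (Real.cosh (σ + t))⁻¹ • (Real.cosh σ • x₀ - Real.sinh σ • ξ)) :
    x 0 = x₀ ∧
    (∀ t : ℝ, HasDerivAt x (ξ - ⟪ξ, x t⟫ • x t) t) ∧
    (∀ t : ℝ, ‖x t‖ = 1) := by
  set w := cosh σ • x₀ - sinh σ • ξ
  have hξw : ⟪ξ, w⟫ = 0 := inner_cosh_smul_sub_sinh_smul ξ x₀ hξ σ hσ
  have hx : x = fun t => tanhSechCurve ξ w (σ + t) := funext hxdef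
  subst hx
  refine ⟨by simpa using tanhSechCurve_cosh_smul_sub_sinh_smul ξ x₀ σ, fun t => ?_, fun t => ?_⟩
  · exact (hasDerivAt_tanhSechCurve ξ w hξ hξw (σ + t)).comp_const_add σ t
  · exact norm_tanhSechCurve ξ w hξ (norm_cosh_smul_sub_sinh_smul ξ x₀ hξ hx₀ σ hσ) hξw _

/-- The curve `x(t) = tanh(σ+t)•ξ + sech(σ+t)•x̃₀`, with
`x̃₀ = cosh(σ)•x₀ − sinh(σ)•ξ`, solves `x' = ξ − ⟨ξ,x⟩•x`, `x(0) = x₀`,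
and stays on the unit sphere. -/
theorem stmt_9 {V : Type*} [NormedAddCommGroup V] [InnerProductSpace ℝ V]
    (ξ x₀ : V) (hξ : ‖ξ‖ = 1) (hx₀ : ‖x₀‖ = 1)
    (σ : ℝ) (hσ : ⟪ξ, x₀⟫ = Real.tanh σ) (hne : x₀ ≠ ξ ∧ x₀ ≠ -ξ)
    (x : ℝ → V)
    (hxdef : ∀ t : ℝ, x t = Real.tanh (σ + t) • ξ +
      (Real.cosh (σ + t))⁻¹ • (Real.cosh σ • x₀ - Real.sinh σ • ξ)) :
    x 0 = x₀ ∧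
    (∀ t : ℝ, HasDerivAt x (ξ - ⟪ξ, x t⟫ • x t) t) ∧
    (∀ t : ℝ, ‖x t‖ = 1) :=
  stmt_9_general ξ x₀ hξ hx₀ σ hσ x hxdef
end

section
/- Let W = V × ℝⁿ where V is a real inner product space with a distinguished point x ∈ V of unit norm, and suppose D : Fin n → Fin n → Fin n → ℝ are functions (structure constants) with D₁ₐ¹ ≠ 0 for some index A ≠ 1. For the bracket on V × ℝⁿ defined by the formulas (with e'₁ identified with x): [eᵢ,eⱼ] = xⱼ•eᵢ − xᵢ•eⱼ, [eᵢ, e'_A] = −xᵢ D_{1A}^C e'_C + δ_{1A}(eᵢ − xᵢ e'₁), the Jacobi cyclic sum for (eᵢ, eⱼ, e'_A) with A ≠ 1 equals −D_{1A}^1 (xᵢ•eⱼ − xⱼ•eᵢ), hence is nonzero whenever D_{1A}^1 ≠ 0 and xᵢ•eⱼ ≠ xⱼ•eᵢ; in particular the bracket fails the Jacobi identity. -/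
open RealInnerProductSpace

/-- On `W = V × ℝ` (the `ℝ` factor spanned by the extra generator `e'_A`, `A ≠ 1`,
with structure constant `d = D_{1A}^1`), the bracket determined by
`[ξ,η] = ⟨η,x⟩•ξ − ⟨ξ,x⟩•η`, `[ξ, e'_A] = −d⟨ξ,x⟩•x` has cyclic Jacobi sum on
`((ξ,0),(η,0),(0,1))` equal to `(d⟨ξ,x⟩•η − d⟨η,x⟩•ξ, 0)`; in particular the
Jacobi identity fails whenever `d ≠ 0` and `⟨ξ,x⟩•η ≠ ⟨η,x⟩•ξ`. -/
theorem stmt_14 {V : Type*} [NormedAddCommGroup V] [InnerProductSpace ℝ V]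
    (x : V) (hx : ‖x‖ = 1) (d : ℝ) (hd : d ≠ 0)
    (b : V × ℝ → V × ℝ → V × ℝ)
    (hb : ∀ p q : V × ℝ, b p q =
      (⟪q.1, x⟫ • p.1 - ⟪p.1, x⟫ • q.1
        - (q.2 * d * ⟪p.1, x⟫) • x + (p.2 * d * ⟪q.1, x⟫) • x, (0 : ℝ))) :
    ∀ ξ η : V,
      b (ξ, 0) (b (η, 0) ((0 : V), 1)) + b (η, 0) (b ((0 : V), 1) (ξ, 0))
          + b ((0 : V), 1) (b (ξ, 0) (η, 0))
        = ((d * ⟪ξ, x⟫) • η - (d * ⟪η, x⟫) • ξ, (0 : ℝ)) ∧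
      (⟪ξ, x⟫ • η ≠ ⟪η, x⟫ • ξ →
        b (ξ, 0) (b (η, 0) ((0 : V), 1)) + b (η, 0) (b ((0 : V), 1) (ξ, 0))
          + b ((0 : V), 1) (b (ξ, 0) (η, 0)) ≠ 0) := by
  intro ξ η
  have hx2 : ⟪x, x⟫ = (1:ℝ) := by
    rw [real_inner_self_eq_norm_sq, hx]; norm_num
  have key : b (ξ, 0) (b (η, 0) ((0 : V), 1)) + b (η, 0) (b ((0 : V), 1) (ξ, 0))
          + b ((0 : V), 1) (b (ξ, 0) (η, 0))
        = ((d * ⟪ξ, x⟫) • η - (d * ⟪η, x⟫) • ξ, (0 : ℝ)) := by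
    simp only [hb, Prod.mk_add_mk, Prod.mk.injEq]
    constructor
    · simp only [inner_zero_left, inner_sub_left, inner_add_left, inner_smul_left,
        RCLike.inner_apply, conj_trivial, hx2]
      module
    · ring
  refine ⟨key, fun hne h0 => hne ?_⟩
  rw [key] at h0
  have h1 : (d * ⟪ξ, x⟫) • η - (d * ⟪η, x⟫) • ξ = 0 := congrArg Prod.fst h0
  have : d • (⟪ξ, x⟫ • η - ⟪η, x⟫ • ξ) = 0 := by
    rw [smul_sub, smul_smul, smul_smul]; exact h1
  have := (smul_eq_zero.mp this).resolve_left hd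
  exact sub_eq_zero.mp this
end
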